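/- arXiv:1505.03635 — 2 statements merged into one kernel-verified Lean document; each statement's English description precedes it below -/
import Mathlib

section
/- If a binary relation → satisfies the diamond property, then any element that weakly normalizes also strongly normalizes: if a →* b for some normal form b, then there is no infinite reduction sequence starting from a. -/
/-- `ReachIn r n a b` : `a` reduces to `b` in at most `n` steps. -/
def ReachIn {A : Type*} (r : A → A → Prop) : ℕ → A → A → Prop
  | 0, a, b => a = b
  | n + 1, a, b => a = b ∨ ∃ c, r a c ∧ ReachIn r n c b

theorem strip {A : Type*} (r : A → A → Prop)
    (hdiam : ∀ a b c, r a b → r a c → b = c ∨ ∃ d, r b d ∧ r c d)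
    (b : A) (hb : ∀ x, ¬ r b x) :
    ∀ n a d, ReachIn r (n + 1) a b → r a d → ReachIn r n d b := by
  intro n
  induction n with
  | zero =>
    intro a d h hd
    rcases h with rfl | ⟨c, hac, hc⟩
    · exact absurd hd (hb d)
    · cases hc
      rcases hdiam a b d hac hd with rfl | ⟨e, hce, hde⟩
      · rfl
      · exact absurd hce (hb e)
  | succ m ih =>
    intro a d h hd
    rcases h with rfl | ⟨c, hac, hc⟩
    · exact absurd hd (hb d)
    · rcases hdiam a c d hac hd with rfl | ⟨e, hce, hde⟩
      · exact hc
      · have hcb := hc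
        rcases hc with rfl | hc'
        · exact absurd hce (hb e)
        · exact Or.inr ⟨e, hde, ih c e hcb hce⟩

theorem no_inf {A : Type*} (r : A → A → Prop)
    (hdiam : ∀ a b c, r a b → r a c → b = c ∨ ∃ d, r b d ∧ r c d)
    (b : A) (hb : ∀ x, ¬ r b x) :
    ∀ n a, ReachIn r n a b →
      ¬ ∃ f : ℕ → A, f 0 = a ∧ ∀ n, r (f n) (f (n + 1)) := by
  intro n
  induction n with
  | zero =>
    rintro a h ⟨f, hf0, hf⟩
    cases h
    exact hb (f 1) (hf0 ▸ hf 0)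
  | succ m ih =>
    rintro a h ⟨f, hf0, hf⟩
    have h1 : r a (f 1) := hf0 ▸ hf 0
    have : ReachIn r m (f 1) b := strip r hdiam b hb m a (f 1) h h1
    exact ih (f 1) this ⟨fun k => f (k + 1), rfl, fun k => hf (k + 1)⟩

theorem diamond_wn_implies_sn {A : Type*} (r : A → A → Prop)
    (hdiam : ∀ a b c, r a b → r a c → b = c ∨ ∃ d, r b d ∧ r c d) :
    ∀ a b, Relation.ReflTransGen r a b → (∀ x, ¬ r b x) →
      ¬ ∃ f : ℕ → A, f 0 = a ∧ ∀ n, r (f n) (f (n + 1)) := by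
  intro a b hab hb
  have : ∃ n, ReachIn r n a b := by
    clear hb
    induction hab with
    | refl => exact ⟨0, rfl⟩
    | tail _ hcd ih =>
      obtain ⟨n, hn⟩ := ih
      clear * - hn hcd
      induction n generalizing a with
      | zero => cases hn; exact ⟨1, Or.inr ⟨_, hcd, rfl⟩⟩
      | succ m ih =>
        rcases hn with rfl | ⟨c, hac, hc⟩
        · exact ⟨1, Or.inr ⟨_, hcd, rfl⟩⟩
        · obtain ⟨k, hk⟩ := ih c hc
          exact ⟨k + 1, Or.inr ⟨c, hac, hk⟩⟩
  obtain ⟨n, hn⟩ := this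
  exact no_inf r hdiam b hb n a hn
end

section
/- Under the diamond property, if some maximal reduction sequence from a is finite (terminates in a normal form), then every reduction sequence from a terminates; in particular all maximal reduction sequences from a end in the same normal form. -/
inductive StepN {A : Type*} (r : A → A → Prop) : ℕ → A → A → Prop where
  | refl (a : A) : StepN r 0 a a
  | head {n : ℕ} {a b c : A} : r a b → StepN r n b c → StepN r (n + 1) a c

theorem stepN_of_rtg {A : Type*} {r : A → A → Prop} {a b : A}
    (h : Relation.ReflTransGen r a b) : ∃ n, StepN r n a b := by
  induction h using Relation.ReflTransGen.head_induction_on with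
  | refl => exact ⟨0, StepN.refl b⟩
  | head hab _ ih =>
    obtain ⟨n, hn⟩ := ih
    exact ⟨n + 1, StepN.head hab hn⟩

/-- Key lemma: if `a` reaches normal form `b` in `n` steps and `r a c`,
then `c` reaches `b` in fewer than `n` steps. -/
theorem stepN_key {A : Type*} {r : A → A → Prop}
    (hdiam : ∀ a b c, r a b → r a c → b = c ∨ ∃ d, r b d ∧ r c d)
    {b : A} (hb : ∀ x, ¬ r b x) :
    ∀ n, ∀ a c, StepN r n a b → r a c → ∃ m, m < n ∧ StepN r m c b := by
  intro n
  induction n using Nat.strong_induction_on with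
  | _ n ih =>
    intro a c hab hac
    cases hab with
    | refl => exact absurd hac (hb c)
    | @head k a a' _ haa' ha'b =>
      rcases hdiam a a' c haa' hac with rfl | ⟨d, ha'd, hcd⟩
      · exact ⟨k, Nat.lt_succ_self k, ha'b⟩
      · obtain ⟨m, hm, hdb⟩ := ih k (Nat.lt_succ_self k) a' d ha'b ha'd
        exact ⟨m + 1, Nat.succ_lt_succ hm, StepN.head hcd hdb⟩

theorem stepN_no_inf {A : Type*} {r : A → A → Prop}
    (hdiam : ∀ a b c, r a b → r a c → b = c ∨ ∃ d, r b d ∧ r c d)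
    {b : A} (hb : ∀ x, ¬ r b x) :
    ∀ n, ∀ (f : ℕ → A), StepN r n (f 0) b → (∀ k, r (f k) (f (k + 1))) → False := by
  intro n
  induction n using Nat.strong_induction_on with
  | _ n ih =>
    intro f h hf
    obtain ⟨m, hm, hmb⟩ := stepN_key hdiam hb n (f 0) (f 1) h (hf 0)
    exact ih m hm (fun k => f (k + 1)) hmb (fun k => hf (k + 1))

theorem stepN_reach {A : Type*} {r : A → A → Prop}
    (hdiam : ∀ a b c, r a b → r a c → b = c ∨ ∃ d, r b d ∧ r c d)
    {b : A} (hb : ∀ x, ¬ r b x) :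
    ∀ n, ∀ a c, StepN r n a b → Relation.ReflTransGen r a c → ∃ m, StepN r m c b := by
  intro n
  induction n using Nat.strong_induction_on with
  | _ n ih =>
    intro a c hab hac
    rcases Relation.ReflTransGen.cases_head hac with rfl | ⟨a', haa', ha'c⟩
    · exact ⟨n, hab⟩
    · obtain ⟨m, hm, hmb⟩ := stepN_key hdiam hb n a a' hab haa'
      exact ih m hm a' c hmb ha'c

theorem diamond_maximal_sequences {A : Type*} (r : A → A → Prop)
    (hdiam : ∀ a b c, r a b → r a c → b = c ∨ ∃ d, r b d ∧ r c d)
    (a : A) (hwn : ∃ b, Relation.ReflTransGen r a b ∧ ∀ x, ¬ r b x) :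
    (¬ ∃ f : ℕ → A, f 0 = a ∧ ∀ n, r (f n) (f (n + 1))) ∧
    (∀ b c, Relation.ReflTransGen r a b → (∀ x, ¬ r b x) →
      Relation.ReflTransGen r a c → (∀ x, ¬ r c x) → b = c) := by
  obtain ⟨b₀, hab₀, hb₀⟩ := hwn
  obtain ⟨n₀, hn₀⟩ := stepN_of_rtg hab₀
  constructor
  · rintro ⟨f, hf0, hf⟩
    exact stepN_no_inf hdiam hb₀ n₀ f (hf0 ▸ hn₀) hf
  · intro b c hab hbnf hac hcnf
    -- b = b₀ and c = b₀
    have hb : b = b₀ := by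
      obtain ⟨m, hm⟩ := stepN_reach hdiam hb₀ n₀ a b hn₀ hab
      cases hm with
      | refl => rfl
      | head h _ => exact absurd h (hbnf _)
    have hc : c = b₀ := by
      obtain ⟨m, hm⟩ := stepN_reach hdiam hb₀ n₀ a c hn₀ hac
      cases hm with
      | refl => rfl
      | head h _ => exact absurd h (hcnf _)
    rw [hb, hc]
end
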